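/- For vector fields X, X₁, X₂ on a manifold, 𝓛_X(L_{X₁X₂}) = L_{[X,X₁]X₂} + L_{X₁[X,X₂]}, where L_{YZ} denotes the diffusor corresponding to the operator f ↦ Y(Z(f)). -/

import Mathlib

/-- Partial derivative in the `i`-th coordinate direction on `ℝⁿ`. -/
noncomputable def pdi {n : ℕ} (i : Fin n) (f : (Fin n → ℝ) → ℝ) : (Fin n → ℝ) → ℝ :=
  fun x => fderiv ℝ f x (Pi.single i 1)

section helpers
variable {n : ℕ}

lemma pdi_contDiff (i : Fin n) {f : (Fin n → ℝ) → ℝ} (hf : ContDiff ℝ (⊤ : ℕ∞) f) :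
    ContDiff ℝ (⊤ : ℕ∞) (pdi i f) := by
  have h : ContDiff ℝ (⊤ : ℕ∞) (fderiv ℝ f) := hf.fderiv_right (by simp)
  exact (ContinuousLinearMap.apply ℝ ℝ (Pi.single i 1 : Fin n → ℝ)).contDiff.comp h

lemma pdi_sub (i : Fin n) {g h : (Fin n → ℝ) → ℝ} {x : Fin n → ℝ}
    (hg : DifferentiableAt ℝ g x) (hh : DifferentiableAt ℝ h x) :
    pdi i (fun y => g y - h y) x = pdi i g x - pdi i h x := by
  simp [pdi, fderiv_fun_sub hg hh]

lemma pdi_sum {ι : Type*} (s : Finset ι) (i : Fin n) {g : ι → (Fin n → ℝ) → ℝ}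
    {x : Fin n → ℝ} (hg : ∀ k ∈ s, DifferentiableAt ℝ (g k) x) :
    pdi i (fun y => ∑ k ∈ s, g k y) x = ∑ k ∈ s, pdi i (g k) x := by
  simp [pdi, fderiv_fun_sum hg]

lemma pdi_mul (i : Fin n) {g h : (Fin n → ℝ) → ℝ} {x : Fin n → ℝ}
    (hg : DifferentiableAt ℝ g x) (hh : DifferentiableAt ℝ h x) :
    pdi i (fun y => g y * h y) x = pdi i g x * h x + g x * pdi i h x := by
  simp only [pdi, fderiv_fun_mul hg hh]
  simp [mul_comm]
  ring

lemma pdi_pdi_symm {f : (Fin n → ℝ) → ℝ} (hf : ContDiff ℝ (⊤ : ℕ∞) f) (i j : Fin n)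
    (x : Fin n → ℝ) : pdi i (pdi j f) x = pdi j (pdi i f) x := by
  have hs : IsSymmSndFDerivAt ℝ f x :=
    (hf.contDiffAt.of_le (WithTop.coe_le_coe.mpr le_top) : ContDiffAt ℝ 2 f x).isSymmSndFDerivAt minSmoothness_of_isRCLikeNormedField.le
  have key : ∀ v w : Fin n → ℝ,
      fderiv ℝ (fun y => fderiv ℝ f y w) x v = fderiv ℝ (fderiv ℝ f) x v w := by
    intro v w
    have h : ContDiff ℝ (⊤ : ℕ∞) (fderiv ℝ f) := hf.fderiv_right (by simp)
    rw [fderiv_clm_apply (h.differentiable (by simp) x) (differentiableAt_const w)]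
    simp
  show fderiv ℝ (fun y => fderiv ℝ f y (Pi.single j 1)) x (Pi.single i 1)
      = fderiv ℝ (fun y => fderiv ℝ f y (Pi.single i 1)) x (Pi.single j 1)
  rw [key, key]
  exact hs _ _
end helpers


/-- Action `X(f) = Xᵏ ∂ₖ f` of a vector field given by its components. -/
noncomputable def vact {n : ℕ} (X : (Fin n → ℝ) → Fin n → ℝ)
    (f : (Fin n → ℝ) → ℝ) : (Fin n → ℝ) → ℝ :=
  fun x => ∑ k, X x k * pdi k f x

/-- Components of the Lie bracket `[X,Y]ʲ = Xⁱ∂ᵢYʲ − Yⁱ∂ᵢXʲ`. -/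
noncomputable def brk {n : ℕ} (X Y : (Fin n → ℝ) → Fin n → ℝ) :
    (Fin n → ℝ) → Fin n → ℝ :=
  fun x j => ∑ i, (X x i * pdi i (fun y => Y y j) x - Y x i * pdi i (fun y => X y j) x)

section helpers2
variable {n : ℕ}

lemma vact_contDiff {X : (Fin n → ℝ) → Fin n → ℝ} {f : (Fin n → ℝ) → ℝ}
    (hX : ∀ i, ContDiff ℝ (⊤ : ℕ∞) (fun x => X x i)) (hf : ContDiff ℝ (⊤ : ℕ∞) f) :
    ContDiff ℝ (⊤ : ℕ∞) (vact X f) :=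
  ContDiff.sum fun k _ => (hX k).mul (pdi_contDiff k hf)

lemma pdi_vact {X : (Fin n → ℝ) → Fin n → ℝ} {f : (Fin n → ℝ) → ℝ}
    (hX : ∀ i, ContDiff ℝ (⊤ : ℕ∞) (fun x => X x i)) (hf : ContDiff ℝ (⊤ : ℕ∞) f)
    (k : Fin n) (x : Fin n → ℝ) :
    pdi k (vact X f) x
      = ∑ i, (pdi k (fun y => X y i) x * pdi i f x + X x i * pdi k (pdi i f) x) := by
  have h1 : pdi k (vact X f) x = ∑ i, pdi k (fun y => X y i * pdi i f y) x :=
    pdi_sum _ k fun i _ =>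
      ((hX i).differentiable (by simp) x).mul ((pdi_contDiff i hf).differentiable (by simp) x)
  rw [h1]
  exact Finset.sum_congr rfl fun i _ =>
    pdi_mul k ((hX i).differentiable (by simp) x) ((pdi_contDiff i hf).differentiable (by simp) x)

lemma vact_brk {X Y : (Fin n → ℝ) → Fin n → ℝ} {f : (Fin n → ℝ) → ℝ}
    (hX : ∀ i, ContDiff ℝ (⊤ : ℕ∞) (fun x => X x i)) (hY : ∀ i, ContDiff ℝ (⊤ : ℕ∞) (fun x => Y x i))
    (hf : ContDiff ℝ (⊤ : ℕ∞) f) (x : Fin n → ℝ) :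
    vact (brk X Y) f x = vact X (vact Y f) x - vact Y (vact X f) x := by
  have e1 : vact X (vact Y f) x
      = ∑ k, ∑ i, (X x k * (pdi k (fun y => Y y i) x * pdi i f x)
          + X x k * (Y x i * pdi k (pdi i f) x)) := by
    simp only [vact]
    refine Finset.sum_congr rfl fun k _ => ?_
    rw [show vact Y f = vact Y f from rfl, pdi_vact hY hf k x, Finset.mul_sum]
    exact Finset.sum_congr rfl fun i _ => by ring
  have e2 : vact Y (vact X f) x
      = ∑ k, ∑ i, (Y x k * (pdi k (fun y => X y i) x * pdi i f x)
          + Y x k * (X x i * pdi k (pdi i f) x)) := by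
    simp only [vact]
    refine Finset.sum_congr rfl fun k _ => ?_
    rw [pdi_vact hX hf k x, Finset.mul_sum]
    exact Finset.sum_congr rfl fun i _ => by ring
  have e3 : (∑ k, ∑ i, Y x k * (X x i * pdi k (pdi i f) x))
      = ∑ k, ∑ i, X x k * (Y x i * pdi k (pdi i f) x) := by
    rw [Finset.sum_comm]
    exact Finset.sum_congr rfl fun k _ => Finset.sum_congr rfl fun i _ => by
      rw [pdi_pdi_symm hf i k x]; ring
  have lhs : vact (brk X Y) f x
      = ∑ i, ∑ k, (X x k * (pdi k (fun y => Y y i) x * pdi i f x)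
          - Y x k * (pdi k (fun y => X y i) x * pdi i f x)) := by
    simp only [vact, brk]
    refine Finset.sum_congr rfl fun i _ => ?_
    rw [Finset.sum_mul]
    exact Finset.sum_congr rfl fun k _ => by ring
  rw [lhs, e1, e2]
  rw [Finset.sum_comm]
  simp only [Finset.sum_add_distrib, Finset.sum_sub_distrib]
  rw [e3]
  ring

lemma vact_sub {X : (Fin n → ℝ) → Fin n → ℝ} {g h : (Fin n → ℝ) → ℝ}
    (hg : ContDiff ℝ (⊤ : ℕ∞) g) (hh : ContDiff ℝ (⊤ : ℕ∞) h) (x : Fin n → ℝ) :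
    vact X (fun y => g y - h y) x = vact X g x - vact X h x := by
  simp only [vact]
  rw [← Finset.sum_sub_distrib]
  refine Finset.sum_congr rfl fun k _ => ?_
  rw [pdi_sub k (hg.differentiable (by simp) x) (hh.differentiable (by simp) x)]
  ring
end helpers2

/-- `𝓛_X(L_{X₁X₂}) = L_{[X,X₁]X₂} + L_{X₁[X,X₂]}`, where `L_{YZ}` is the diffusor
corresponding to the operator `f ↦ Y(Z(f))` and the Lie derivative of a diffusor `L`
acts as `f ↦ X(L(f)) − L(X(f))`. -/
theorem lie_derivative_LXY {n : ℕ}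
    (X X₁ X₂ : (Fin n → ℝ) → Fin n → ℝ)
    (hX : ∀ i, ContDiff ℝ (⊤ : ℕ∞) (fun x => X x i))
    (hX₁ : ∀ i, ContDiff ℝ (⊤ : ℕ∞) (fun x => X₁ x i))
    (hX₂ : ∀ i, ContDiff ℝ (⊤ : ℕ∞) (fun x => X₂ x i)) :
    ∀ (f : (Fin n → ℝ) → ℝ), ContDiff ℝ (⊤ : ℕ∞) f → ∀ x,
      vact X (vact X₁ (vact X₂ f)) x - vact X₁ (vact X₂ (vact X f)) x
        = vact (brk X X₁) (vact X₂ f) x + vact X₁ (vact (brk X X₂) f) x := by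
  intro f hf x
  have hX₂f : ContDiff ℝ (⊤ : ℕ∞) (vact X₂ f) := vact_contDiff hX₂ hf
  have hXf : ContDiff ℝ (⊤ : ℕ∞) (vact X f) := vact_contDiff hX hf
  have h1 : vact (brk X X₁) (vact X₂ f) x
      = vact X (vact X₁ (vact X₂ f)) x - vact X₁ (vact X (vact X₂ f)) x :=
    vact_brk hX hX₁ hX₂f x
  have h2 : vact (brk X X₂) f = fun y => vact X (vact X₂ f) y - vact X₂ (vact X f) y :=
    funext fun y => vact_brk hX hX₂ hf y
  have h3 : vact X₁ (vact (brk X X₂) f) x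
      = vact X₁ (vact X (vact X₂ f)) x - vact X₁ (vact X₂ (vact X f)) x := by
    rw [h2, vact_sub (vact_contDiff hX hX₂f) (vact_contDiff hX₂ hXf) x]
  rw [h1, h3]
  ring
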